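/- arXiv:1210.3429 — 2 statements merged into one kernel-verified Lean document; each statement's English description precedes it below -/
import Mathlib

section
/- Let v0(x₁, x₂) = 1_{[0,1]}(x₁) on ℝ². Then for every t ∈ (0, 1/64) and every x = (x₁, x₂) with t^{1/2} < x₁ < 2t^{1/2}, one has t^{1/2} |∂₁ e^{tΔ}v0(x)| ≥ (1/√π) ∫₁³ z e^{-z²} dz. -/
noncomputable section
open MeasureTheory Real ENNReal Set intervalIntegral

/-- The plane `ℝ²`. -/
abbrev E2 : Type := EuclideanSpace ℝ (Fin 2)

/-- The two-dimensional heat kernel `K_t(x) = (4πt)⁻¹ exp(-|x|²/(4t))`. -/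
def heatKernel (t : ℝ) (x : E2) : ℝ := (4 * π * t)⁻¹ * Real.exp (-‖x‖ ^ 2 / (4 * t))

/-- The heat semigroup `e^{tΔ}f(x) = ∫ (4πt)⁻¹ e^{-|x-y|²/(4t)} f(y) dy`. -/
def heatSG (t : ℝ) (f : E2 → ℝ) (x : E2) : ℝ := ∫ y : E2, heatKernel t (x - y) * f y

/-- The initial datum `v0(x₁,x₂) = 1_{[0,1]}(x₁)`. -/
def v0Ind : E2 → ℝ := fun x => Set.indicator (Set.Icc (0 : ℝ) 1) (fun _ => (1 : ℝ)) (x 0)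

/-! Since `v0` depends on `x₁` only, the heat kernel factors into one-dimensional kernels `k_t`
and `e^{tΔ}v0(x) = ∫_{x₁-1}^{x₁} k_t`, so `∂₁e^{tΔ}v0(x) = k_t(x₁) - k_t(x₁-1)`, while
`√t k_t(s) = e^{-s²/4t}/(2√π)`. For `√t < x₁ < 2√t` and `8√t < 1` the first exponent
`x₁²/4t` is at most `1` and the second `(1-x₁)²/4t` at least `9`, and
`∫₁³ z e^{-z²} dz = (e^{-1} - e^{-9})/2`. -/

def heatKernel1D (t s : ℝ) : ℝ := (√(4 * π * t))⁻¹ * exp (-s ^ 2 / (4 * t))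

lemma heatKernel_eq_heatKernel1D_mul {t : ℝ} (ht : 0 ≤ t) (z : E2) :
    heatKernel t z = heatKernel1D t (z 0) * heatKernel1D t (z 1) := by
  have hnorm : ‖z‖ ^ 2 = z 0 ^ 2 + z 1 ^ 2 := by
    simp [EuclideanSpace.norm_sq_eq, Fin.sum_univ_two]
  have hinv : (4 * π * t)⁻¹ = (√(4 * π * t))⁻¹ * (√(4 * π * t))⁻¹ := by
    rw [← mul_inv, Real.mul_self_sqrt (by positivity)]
  rw [heatKernel, heatKernel1D, heatKernel1D, hnorm, hinv, neg_add, add_div, Real.exp_add]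
  ring

lemma integral_heatKernel1D {t : ℝ} (ht : 0 < t) : ∫ s, heatKernel1D t s = 1 := by
  have hexp : ∀ s : ℝ, -s ^ 2 / (4 * t) = -(4 * t)⁻¹ * s ^ 2 := fun s => by ring
  simp only [heatKernel1D, MeasureTheory.integral_const_mul, hexp, integral_gaussian,
    div_inv_eq_mul]
  rw [show π * (4 * t) = 4 * π * t by ring]
  exact inv_mul_cancel₀ (by positivity)

lemma integral_euclideanSpace_fin_two_mul (f g : ℝ → ℝ) :
    ∫ y : E2, f (y 0) * g (y 1) = (∫ s, f s) * ∫ s, g s := by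
  have he := (EuclideanSpace.volume_preserving_symm_measurableEquiv_toLp (Fin 2)).trans
    (volume_preserving_finTwoArrow ℝ)
  rw [← he.symm.integral_comp', Measure.volume_eq_prod, ← integral_prod_mul]
  rfl

lemma heatSG_comp_coord_zero {t : ℝ} (ht : 0 < t) (f : ℝ → ℝ) (x : E2) :
    heatSG t (fun y => f (y 0)) x = ∫ s, heatKernel1D t (x 0 - s) * f s := by
  have hsplit : ∀ y : E2, heatKernel t (x - y) * f (y 0)
      = heatKernel1D t (x 0 - y 0) * f (y 0) * heatKernel1D t (x 1 - y 1) := fun y => by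
    rw [heatKernel_eq_heatKernel1D_mul ht.le]; simp only [PiLp.sub_apply]; ring
  simp only [heatSG, hsplit]
  rw [integral_euclideanSpace_fin_two_mul (fun s => heatKernel1D t (x 0 - s) * f s)
    (fun s => heatKernel1D t (x 1 - s)), integral_sub_left_eq_self (heatKernel1D t),
    integral_heatKernel1D ht, mul_one]

lemma integral_comp_sub_mul_indicator_Icc (g : ℝ → ℝ) {b c : ℝ} (hbc : b ≤ c) (a : ℝ) :
    ∫ s, g (a - s) * (Icc b c).indicator (fun _ => 1) s = ∫ u in (a - c)..(a - b), g u := by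
  simp_rw [← indicator_mul_right _ (fun s => g (a - s)) (fun _ => (1 : ℝ)), mul_one]
  rw [MeasureTheory.integral_indicator measurableSet_Icc, integral_Icc_eq_integral_Ioc,
    ← integral_of_le hbc, intervalIntegral.integral_comp_sub_left]

lemma hasDerivAt_intervalIntegral_sub_sub {g : ℝ → ℝ} (hg : Continuous g) (b c a : ℝ) :
    HasDerivAt (fun a => ∫ u in (a - c)..(a - b), g u) (g (a - b) - g (a - c)) a := by
  have hprim : ∀ d, HasDerivAt (fun a => ∫ u in (0 : ℝ)..(a - d), g u) (g (a - d)) a :=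
    fun d => by
      simpa [Function.comp_def] using (hg.integral_hasStrictDerivAt 0 (a - d)).hasDerivAt.comp a
        ((hasDerivAt_id a).sub_const d)
  have hsplit : (fun a => ∫ u in (a - c)..(a - b), g u)
      = fun a => (∫ u in (0 : ℝ)..(a - b), g u) - ∫ u in (0 : ℝ)..(a - c), g u := funext fun a =>
    (integral_interval_sub_left (hg.intervalIntegrable _ _) (hg.intervalIntegrable _ _)).symm
  rw [hsplit]
  exact (hprim b).sub (hprim c)

lemma fderiv_comp_coord_apply_single {n : ℕ} (i : Fin n) {F : ℝ → ℝ} {F' : ℝ}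
    {x : EuclideanSpace ℝ (Fin n)} (hF : HasDerivAt F F' (x i)) :
    fderiv ℝ (fun y : EuclideanSpace ℝ (Fin n) => F (y i)) x (EuclideanSpace.single i 1) = F' := by
  have hcomp : HasFDerivAt (fun y : EuclideanSpace ℝ (Fin n) => F (y i))
      (F' • EuclideanSpace.proj i) x :=
    hF.comp_hasFDerivAt (f := fun y : EuclideanSpace ℝ (Fin n) => y i) x
      (EuclideanSpace.proj i : EuclideanSpace ℝ (Fin n) →L[ℝ] ℝ).hasFDerivAt
  rw [hcomp.fderiv]
  simp

lemma integral_mul_exp_neg_sq (a b : ℝ) :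
    ∫ z in a..b, z * exp (-z ^ 2) = (exp (-a ^ 2) - exp (-b ^ 2)) / 2 := by
  have hderiv : ∀ z : ℝ, HasDerivAt (fun z => -exp (-z ^ 2) / 2) (z * exp (-z ^ 2)) z := fun z =>
    ((hasDerivAt_pow 2 z).neg.exp.neg.div_const 2).congr_deriv (by simp; ring)
  rw [integral_eq_sub_of_hasDerivAt (fun z _ => hderiv z)
    ((by fun_prop : Continuous fun z : ℝ => z * exp (-z ^ 2)).intervalIntegrable a b)]
  ring

lemma sqrt_mul_heatKernel1D {t : ℝ} (ht : 0 < t) (s : ℝ) :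
    √t * heatKernel1D t s = exp (-s ^ 2 / (4 * t)) / (2 * √π) := by
  have hsqrt : √(4 * π * t) = 2 * √π * √t := by
    rw [Real.sqrt_mul (by positivity), Real.sqrt_mul (by norm_num),
      show (4 : ℝ) = 2 ^ 2 by norm_num, Real.sqrt_sq (by norm_num)]
  have : 0 < √t := Real.sqrt_pos.mpr ht
  rw [heatKernel1D, hsqrt]
  field_simp

lemma exp_neg_one_sub_exp_neg_nine_le {σ a : ℝ} (hσ : 0 < σ) (hσ' : 8 * σ ≤ 1)
    (ha : |a| ≤ 2 * σ) :
    exp (-1) - exp (-9) ≤ exp (-a ^ 2 / (4 * σ ^ 2)) - exp (-(a - 1) ^ 2 / (4 * σ ^ 2)) := by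
  obtain ⟨ha₁, ha₂⟩ := abs_le.mp ha
  have hnear : -1 ≤ -a ^ 2 / (4 * σ ^ 2) := by
    rw [le_div_iff₀ (by positivity)]; nlinarith
  have hfar : -(a - 1) ^ 2 / (4 * σ ^ 2) ≤ -9 := by
    rw [div_le_iff₀ (by positivity)]; nlinarith
  linarith [exp_le_exp.mpr hnear, exp_le_exp.mpr hfar]

/-- for `v0(x₁,x₂) = 1_{[0,1]}(x₁)`, every `t ∈ (0, 1/64)` and every
`x = (x₁,x₂)` with `√t < x₁ < 2√t`, one has
`t^{1/2} |∂₁ e^{tΔ}v0(x)| ≥ (1/√π) ∫₁³ z e^{-z²} dz`. -/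
theorem heatSG_indicator_gradient_lower_bound (t : ℝ) (ht : 0 < t) (ht' : t < 1 / 64)
    (x : E2) (hx1 : Real.sqrt t < x 0) (hx2 : x 0 < 2 * Real.sqrt t) :
    t ^ (1 / 2 : ℝ) * |fderiv ℝ (heatSG t v0Ind) x (EuclideanSpace.single 0 1)| ≥
      (1 / Real.sqrt π) * ∫ z in (1 : ℝ)..3, z * Real.exp (-z ^ 2) := by
  have hcont : Continuous (heatKernel1D t) := by unfold heatKernel1D; fun_prop
  have hrepr : heatSG t v0Ind = fun y => ∫ u in (y 0 - 1)..(y 0 - 0), heatKernel1D t u :=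
    funext fun y => (heatSG_comp_coord_zero ht _ y).trans
      (integral_comp_sub_mul_indicator_Icc _ zero_le_one _)
  have hsqrt_pos : 0 < √t := Real.sqrt_pos.mpr ht
  have hsqrt_small : 8 * √t ≤ 1 := by
    have := (Real.sqrt_lt' (x := t) (by norm_num : (0 : ℝ) < 1 / 8)).mpr (by linarith)
    linarith
  have hgap := exp_neg_one_sub_exp_neg_nine_le hsqrt_pos hsqrt_small
    (abs_le.mpr ⟨by linarith, hx2.le⟩)
  rw [Real.sq_sqrt ht.le] at hgap
  rw [hrepr, fderiv_comp_coord_apply_single 0 (hasDerivAt_intervalIntegral_sub_sub hcont 0 1 _),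
    sub_zero, ← Real.sqrt_eq_rpow, ← abs_of_pos hsqrt_pos, ← abs_mul, mul_sub,
    sqrt_mul_heatKernel1D ht, sqrt_mul_heatKernel1D ht, integral_mul_exp_neg_sq, ← sub_div]
  have hrhs :
      1 / √π * ((exp (-1 ^ 2) - exp (-3 ^ 2)) / 2) = (exp (-1) - exp (-9)) / (2 * √π) := by
    norm_num; ring
  rw [ge_iff_le, hrhs]
  exact (div_le_div_of_nonneg_right hgap (by positivity)).trans (le_abs_self _)
end
end

section
/- Define the norm ‖u‖_X = sup_{t>0} ‖u(t,·)‖_{L¹(ℝ²)} + sup_{t>0} t‖u(t,·)‖_{L^∞(ℝ²)} and let L(u)(t) = ∫₀^t e^{-(t−τ)} e^{(t−τ)Δ} u(τ) dτ. Then there is a constant c > 0 such that sup_{t>0} ‖L(u)(t)‖_{L^∞(ℝ²)} ≤ c ‖u‖_X for all u with ‖u‖_X < ∞. -/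
noncomputable section
open MeasureTheory Real ENNReal Set

/-- `‖u‖_X = sup_{t>0} ‖u(t,·)‖_{L¹} + sup_{t>0} t ‖u(t,·)‖_{L^∞}`. -/
def Xnorm (u : ℝ → E2 → ℝ) : ℝ≥0∞ :=
  (⨆ t ∈ Ioi (0 : ℝ), eLpNorm (u t) 1 (volume : Measure E2)) +
    ⨆ t ∈ Ioi (0 : ℝ), ENNReal.ofReal t * eLpNorm (u t) ∞ (volume : Measure E2)

/-- The linear Duhamel term `L(u)(t) = ∫₀ᵗ e^{-(t-τ)} e^{(t-τ)Δ} u(τ) dτ`. -/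
def Lop (u : ℝ → E2 → ℝ) (t : ℝ) (x : E2) : ℝ :=
  ∫ τ in Ioc (0 : ℝ) t, Real.exp (-(t - τ)) * heatSG (t - τ) (u τ) x

/-! Split the Duhamel integral at `τ = t / 2` and drop the damping factor `e^{-(t-τ)} ≤ 1`.
On `(0, t/2]` the heat semigroup maps `L¹` to `L^∞` with `‖e^{sΔ}f‖_∞ ≤ (4πs)⁻¹ ‖f‖₁`, and
`s = t - τ ≥ t / 2`, so this part is at most `(2πt)⁻¹ · (t/2) · sup_τ ‖u(τ)‖₁ ≤ sup_τ ‖u(τ)‖₁`.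
On `(t/2, t]` the semigroup is an `L^∞` contraction (the kernel is a probability density) and
`‖u(τ)‖_∞ ≤ (2/t) sup_τ τ ‖u(τ)‖_∞` on an interval of length `t / 2`. Hence `c = 1` works. -/

section Holder

variable {α : Type*} [MeasurableSpace α] {μ : Measure α}

theorem enorm_integral_mul_le_lintegral_mul_eLpNorm_top {g : α → ℝ} (hg : AEMeasurable g μ)
    (f : α → ℝ) : ‖∫ y, g y * f y ∂μ‖ₑ ≤ (∫⁻ y, ‖g y‖ₑ ∂μ) * eLpNorm f ∞ μ :=
  calc ‖∫ y, g y * f y ∂μ‖ₑ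
      ≤ ∫⁻ y, ‖g y‖ₑ * ‖f y‖ₑ ∂μ := by
        simpa only [enorm_mul] using enorm_integral_le_lintegral_enorm (fun y => g y * f y)
    _ ≤ ∫⁻ y, ‖g y‖ₑ * eLpNorm f ∞ μ ∂μ := by
        refine lintegral_mono_ae ?_
        filter_upwards [enorm_ae_le_eLpNormEssSup f μ] with y hy
        rw [eLpNorm_exponent_top]
        gcongr
    _ = (∫⁻ y, ‖g y‖ₑ ∂μ) * eLpNorm f ∞ μ := lintegral_mul_const'' _ hg.enorm

theorem enorm_integral_mul_le_mul_eLpNorm_one {g : α → ℝ} {C : ℝ} (hg : ∀ y, ‖g y‖ ≤ C)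
    (f : α → ℝ) : ‖∫ y, g y * f y ∂μ‖ₑ ≤ ENNReal.ofReal C * eLpNorm f 1 μ :=
  calc ‖∫ y, g y * f y ∂μ‖ₑ
      ≤ ∫⁻ y, ‖g y‖ₑ * ‖f y‖ₑ ∂μ := by
        simpa only [enorm_mul] using enorm_integral_le_lintegral_enorm (fun y => g y * f y)
    _ ≤ ∫⁻ y, ENNReal.ofReal C * ‖f y‖ₑ ∂μ := lintegral_mono fun y => by
        gcongr; exact ofReal_norm (g y) ▸ ofReal_le_ofReal (hg y)
    _ = ENNReal.ofReal C * eLpNorm f 1 μ := by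
        rw [lintegral_const_mul' _ _ ofReal_ne_top, eLpNorm_one_eq_lintegral_enorm]

end Holder

theorem heatKernel_nonneg {s : ℝ} (hs : 0 ≤ s) (x : E2) : 0 ≤ heatKernel s x := by
  unfold heatKernel
  positivity

theorem heatKernel_le {s : ℝ} (hs : 0 ≤ s) (x : E2) : heatKernel s x ≤ (4 * π * s)⁻¹ :=
  mul_le_of_le_one_right (by positivity) <| Real.exp_le_one_iff.2 <| by
    rw [neg_div]; exact neg_nonpos.2 (by positivity)

theorem continuous_heatKernel (s : ℝ) : Continuous (heatKernel s) := by
  unfold heatKernel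
  fun_prop

theorem integral_heatKernel {s : ℝ} (hs : 0 < s) : ∫ x, heatKernel s x = 1 := by
  have hgauss := GaussianFourier.integral_rexp_neg_mul_sq_norm (V := E2)
    (inv_pos.2 (by positivity : 0 < 4 * s))
  rw [finrank_euclideanSpace_fin, Nat.cast_ofNat, div_self two_ne_zero, Real.rpow_one] at hgauss
  simp_rw [heatKernel, div_eq_inv_mul _ (4 * s), mul_neg, ← neg_mul]
  rw [integral_const_mul, hgauss]
  field_simp

theorem lintegral_enorm_heatKernel_sub {s : ℝ} (hs : 0 < s) (x : E2) :
    ∫⁻ y, ‖heatKernel s (x - y)‖ₑ = 1 := by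
  have hint : Integrable (heatKernel s) :=
    .of_integral_ne_zero (by rw [integral_heatKernel hs]; exact one_ne_zero)
  rw [(Measure.measurePreserving_sub_left volume x).lintegral_comp
    (continuous_heatKernel s).enorm.measurable, ← ofReal_integral_norm_eq_lintegral_enorm hint]
  simp_rw [Real.norm_of_nonneg (heatKernel_nonneg hs.le _), integral_heatKernel hs, ofReal_one]

theorem enorm_heatSG_le_eLpNorm_top {s : ℝ} (hs : 0 ≤ s) (f : E2 → ℝ) (x : E2) :
    ‖heatSG s f x‖ₑ ≤ eLpNorm f ∞ volume := by
  rcases hs.eq_or_lt with rfl | hs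
  · -- the kernel vanishes identically at `s = 0`, since `0⁻¹ = 0`
    simp [heatSG, heatKernel]
  · refine (enorm_integral_mul_le_lintegral_mul_eLpNorm_top (g := fun y => heatKernel s (x - y))
      ((continuous_heatKernel s).comp (continuous_sub_left x)).aemeasurable f).trans_eq ?_
    rw [lintegral_enorm_heatKernel_sub hs x, one_mul]

theorem enorm_heatSG_le_eLpNorm_one {s : ℝ} (hs : 0 ≤ s) (f : E2 → ℝ) (x : E2) :
    ‖heatSG s f x‖ₑ ≤ ENNReal.ofReal (4 * π * s)⁻¹ * eLpNorm f 1 volume :=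
  enorm_integral_mul_le_mul_eLpNorm_one (fun y => by
    rw [Real.norm_of_nonneg (heatKernel_nonneg hs _)]; exact heatKernel_le hs _) f

theorem setLIntegral_Ioc_le_mul {f : ℝ → ℝ≥0∞} {a b : ℝ} {C : ℝ≥0∞}
    (h : ∀ τ ∈ Ioc a b, f τ ≤ C) : ∫⁻ τ in Ioc a b, f τ ≤ C * ENNReal.ofReal (b - a) :=
  (setLIntegral_mono' measurableSet_Ioc h).trans_eq <| by
    rw [setLIntegral_const, Real.volume_Ioc]

theorem enorm_Lop_le_lintegral (u : ℝ → E2 → ℝ) (t : ℝ) (x : E2) :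
    ‖Lop u t x‖ₑ ≤ ∫⁻ τ in Ioc 0 t, ‖heatSG (t - τ) (u τ) x‖ₑ :=
  (enorm_integral_le_lintegral_enorm _).trans <|
    setLIntegral_mono' measurableSet_Ioc fun τ hτ => by
      rw [enorm_mul, Real.enorm_of_nonneg (Real.exp_nonneg _)]
      refine mul_le_of_le_one_left' (ofReal_le_one.2 (Real.exp_le_one_iff.2 ?_))
      linarith [hτ.2]

section Duhamel

variable {u : ℝ → E2 → ℝ} {t : ℝ}

theorem lintegral_heatSG_Ioc_zero_half_le {A : ℝ≥0∞}
    (hA : ∀ τ ∈ Ioi 0, eLpNorm (u τ) 1 volume ≤ A) (ht : 0 < t) (x : E2) :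
    ∫⁻ τ in Ioc 0 (t / 2), ‖heatSG (t - τ) (u τ) x‖ₑ ≤ A := by
  have hbound : ∀ τ ∈ Ioc 0 (t / 2),
      ‖heatSG (t - τ) (u τ) x‖ₑ ≤ ENNReal.ofReal (2 * π * t)⁻¹ * A := fun τ hτ => by
    refine (enorm_heatSG_le_eLpNorm_one (by linarith [hτ.2]) _ x).trans ?_
    gcongr ?_ * ?_
    · exact ofReal_le_ofReal <| inv_anti₀ (by positivity) (by nlinarith [hτ.2, Real.pi_pos])
    · exact hA τ hτ.1
  calc ∫⁻ τ in Ioc 0 (t / 2), ‖heatSG (t - τ) (u τ) x‖ₑ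
      ≤ ENNReal.ofReal (2 * π * t)⁻¹ * A * ENNReal.ofReal (t / 2 - 0) :=
        setLIntegral_Ioc_le_mul hbound
    _ = ENNReal.ofReal (4 * π)⁻¹ * A := by
        rw [mul_right_comm, ← ofReal_mul (by positivity)]
        congr 3
        field_simp
        ring
    _ ≤ A := mul_le_of_le_one_left' <| ofReal_le_one.2 <|
        inv_le_one_of_one_le₀ (by nlinarith [Real.pi_gt_three])

theorem lintegral_heatSG_Ioc_half_le {B : ℝ≥0∞}
    (hB : ∀ τ ∈ Ioi 0, ENNReal.ofReal τ * eLpNorm (u τ) ∞ volume ≤ B) (ht : 0 < t) (x : E2) :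
    ∫⁻ τ in Ioc (t / 2) t, ‖heatSG (t - τ) (u τ) x‖ₑ ≤ B := by
  have hbound : ∀ τ ∈ Ioc (t / 2) t,
      ‖heatSG (t - τ) (u τ) x‖ₑ ≤ B / ENNReal.ofReal (t / 2) := fun τ hτ => by
    have hτ0 : 0 < τ := by linarith [hτ.1]
    refine (enorm_heatSG_le_eLpNorm_top (by linarith [hτ.2]) _ x).trans ?_
    calc eLpNorm (u τ) ∞ volume ≤ B / ENNReal.ofReal τ := by
          rw [ENNReal.le_div_iff_mul_le (by simp [hτ0]) (by simp), mul_comm]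
          exact hB τ hτ0
      _ ≤ B / ENNReal.ofReal (t / 2) := by gcongr; exact hτ.1.le
  calc ∫⁻ τ in Ioc (t / 2) t, ‖heatSG (t - τ) (u τ) x‖ₑ
      ≤ B / ENNReal.ofReal (t / 2) * ENNReal.ofReal (t - t / 2) :=
        setLIntegral_Ioc_le_mul hbound
    _ = B := by
        rw [show t - t / 2 = t / 2 by ring, ENNReal.div_mul_cancel (by simp [ht]) ofReal_ne_top]

theorem enorm_Lop_le {A B : ℝ≥0∞} (hA : ∀ τ ∈ Ioi 0, eLpNorm (u τ) 1 volume ≤ A)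
    (hB : ∀ τ ∈ Ioi 0, ENNReal.ofReal τ * eLpNorm (u τ) ∞ volume ≤ B) (ht : 0 < t) (x : E2) :
    ‖Lop u t x‖ₑ ≤ A + B :=
  calc ‖Lop u t x‖ₑ ≤ ∫⁻ τ in Ioc 0 t, ‖heatSG (t - τ) (u τ) x‖ₑ := enorm_Lop_le_lintegral u t x
    _ = (∫⁻ τ in Ioc 0 (t / 2), ‖heatSG (t - τ) (u τ) x‖ₑ) +
          ∫⁻ τ in Ioc (t / 2) t, ‖heatSG (t - τ) (u τ) x‖ₑ := by
        rw [← lintegral_union measurableSet_Ioc (Ioc_disjoint_Ioc_of_le le_rfl),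
          Ioc_union_Ioc_eq_Ioc (by linarith) (by linarith)]
    _ ≤ A + B := add_le_add (lintegral_heatSG_Ioc_zero_half_le hA ht x)
        (lintegral_heatSG_Ioc_half_le hB ht x)

end Duhamel

/-- there is a constant `c > 0` such that
`sup_{t>0} ‖L(u)(t)‖_{L^∞(ℝ²)} ≤ c ‖u‖_X` for all `u` with `‖u‖_X < ∞`. -/
theorem linear_estimate_Linfty :
    ∃ c : ℝ, 0 < c ∧ ∀ u : ℝ → E2 → ℝ,
      Measurable (Function.uncurry u) → Xnorm u < ∞ →
      (⨆ t ∈ Ioi (0 : ℝ), eLpNorm (Lop u t) ∞ (volume : Measure E2))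
        ≤ ENNReal.ofReal c * Xnorm u := by
  refine ⟨1, one_pos, fun u _ _ => ?_⟩
  rw [ofReal_one, one_mul]
  refine iSup₂_le fun t ht => ?_
  rw [eLpNorm_exponent_top]
  exact eLpNormEssSup_le_of_ae_enorm_bound <| .of_forall <|
    enorm_Lop_le (fun _ => le_biSup fun τ => eLpNorm (u τ) 1 volume)
      (fun _ => le_biSup fun τ => ENNReal.ofReal τ * eLpNorm (u τ) ∞ volume) ht
end
end
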